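/- For positive definite Hermitian matrices A, B and any unitary matrix V, one has tr((A^{1/2} - B^{1/2} V)* (A^{1/2} - B^{1/2} V)) ≥ tr(A) + tr(B) - 2·tr((A^{1/2} B A^{1/2})^{1/2}), with equality when V = B^{-1/2} A^{-1/2} (A^{1/2} B A^{1/2})^{1/2}. -/

import Mathlib

/-!
Write `P = A^{1/2}`, `Q = B^{1/2}` and `S = (P B P)^{1/2}`. Expanding the square,
`re tr((P - Q V)ᴴ (P - Q V)) = tr A + tr B - 2 re tr(P Q V)`, so everything reduces to
`re tr(P Q V) ≤ tr S`. Since `(P Q V)(P Q V)ᴴ = P B P = S²`, the matrix `W = S⁻¹ P Q V`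
is unitary and `P Q V = S W`; finally `re tr(S W) ≤ tr S` for every unitary `W`, because
`tr((1 - W)ᴴ S (1 - W)) = 2 tr S - 2 re tr(S W)` is nonnegative. For `V = Q⁻¹ P⁻¹ S` one has
`Q V = P⁻¹ S` and `P Q V = S`, so the bound is attained.
-/

open Matrix
open scoped ComplexOrder

noncomputable def Matrix.PosSemidef.sqrt {n 𝕜 : Type*} [Fintype n] [DecidableEq n] [RCLike 𝕜]
    {A : Matrix n n 𝕜} (hA : A.PosSemidef) : Matrix n n 𝕜 :=
  hA.1.eigenvectorUnitary.1 * diagonal ((↑) ∘ (Real.sqrt ∘ hA.1.eigenvalues)) *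
  (star hA.1.eigenvectorUnitary : Matrix n n 𝕜)

namespace Matrix

variable {n 𝕜 : Type*} [Fintype n] [DecidableEq n] [RCLike 𝕜]

namespace PosSemidef

variable {A : Matrix n n 𝕜}

theorem sqrt_eq_cfc (hA : A.PosSemidef) : hA.sqrt = cfc Real.sqrt A := by
  rw [hA.1.cfc_eq, IsHermitian.cfc, Unitary.conjStarAlgAut_apply]
  rfl

theorem sqrt_mul_self (hA : A.PosSemidef) : hA.sqrt * hA.sqrt = A := by
  rw [sqrt_eq_cfc, ← cfc_mul Real.sqrt Real.sqrt A]
  conv_rhs => rw [← cfc_id' ℝ A hA.1]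
  refine cfc_congr fun x hx => Real.mul_self_sqrt ?_
  rw [hA.1.spectrum_real_eq_range_eigenvalues] at hx
  obtain ⟨i, rfl⟩ := hx
  exact hA.eigenvalues_nonneg i

open scoped MatrixOrder in
theorem posSemidef_sqrt (hA : A.PosSemidef) : hA.sqrt.PosSemidef := by
  rw [← nonneg_iff_posSemidef, sqrt_eq_cfc]
  exact cfc_nonneg fun x _ => Real.sqrt_nonneg x

theorem isUnit_det_sqrt (hA : A.PosSemidef) (h : IsUnit A.det) : IsUnit hA.sqrt.det := by
  rw [← hA.sqrt_mul_self, det_mul] at h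
  exact isUnit_of_mul_isUnit_left h

end PosSemidef

theorem re_trace_conjTranspose_sub_mul_sub (P X : Matrix n n 𝕜) :
    RCLike.re ((P - X)ᴴ * (P - X)).trace =
      RCLike.re (Pᴴ * P).trace + RCLike.re (X * Xᴴ).trace - 2 * RCLike.re (Pᴴ * X).trace := by
  have hexpand : (P - X)ᴴ * (P - X) = Pᴴ * P - Pᴴ * X - Xᴴ * P + Xᴴ * X := by
    rw [conjTranspose_sub]
    noncomm_ring
  have hcross : (Xᴴ * P).trace = star (Pᴴ * X).trace := by
    rw [← trace_conjTranspose, conjTranspose_mul, conjTranspose_conjTranspose]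
  rw [hexpand, trace_add, trace_sub, trace_sub, hcross, trace_mul_comm Xᴴ]
  simp only [map_add, map_sub, RCLike.star_def, RCLike.conj_re]
  ring

theorem PosSemidef.re_trace_mul_le {S U : Matrix n n 𝕜} (hS : S.PosSemidef) (hU : U * Uᴴ = 1) :
    RCLike.re (S * U).trace ≤ RCLike.re S.trace := by
  have hnonneg : 0 ≤ RCLike.re ((1 - U)ᴴ * S * (1 - U)).trace :=
    (RCLike.nonneg_iff.mp (hS.conjTranspose_mul_mul_same (1 - U)).trace_nonneg).1
  have hexpand : (1 - U)ᴴ * S * (1 - U) = S - S * U - Uᴴ * S + Uᴴ * (S * U) := by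
    rw [conjTranspose_sub, conjTranspose_one]
    noncomm_ring
  have hcross : (Uᴴ * S).trace = star (S * U).trace := by
    rw [← trace_conjTranspose, conjTranspose_mul, hS.isHermitian.eq]
  have hconj : (Uᴴ * (S * U)).trace = S.trace := by
    rw [trace_mul_comm, mul_assoc, hU, mul_one]
  rw [hexpand, trace_add, trace_sub, trace_sub, hcross, hconj] at hnonneg
  simp only [map_add, map_sub, RCLike.star_def, RCLike.conj_re] at hnonneg
  linarith

theorem PosSemidef.re_trace_le_of_mul_conjTranspose_eq {S M : Matrix n n 𝕜} (hS : S.PosSemidef)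
    (hSdet : IsUnit S.det) (hM : M * Mᴴ = S * S) : RCLike.re M.trace ≤ RCLike.re S.trace := by
  have hunitary : S⁻¹ * M * (S⁻¹ * M)ᴴ = 1 := by
    rw [conjTranspose_mul, conjTranspose_nonsing_inv, hS.isHermitian.eq, mul_assoc, ← mul_assoc M,
      hM, mul_assoc, mul_nonsing_inv _ hSdet, mul_one, nonsing_inv_mul _ hSdet]
  simpa only [mul_nonsing_inv_cancel_left _ _ hSdet] using hS.re_trace_mul_le hunitary

end Matrix

theorem allpass_minimizes_factor_distance (n : ℕ)
    (A B : Matrix (Fin n) (Fin n) ℂ) (hA : A.PosDef) (hB : B.PosDef)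
    (hS : (hA.posSemidef.sqrt * B * hA.posSemidef.sqrt).PosSemidef) :
    (∀ V ∈ Matrix.unitaryGroup (Fin n) ℂ,
        A.trace.re + B.trace.re - 2 * hS.sqrt.trace.re ≤
          (((hA.posSemidef.sqrt - hB.posSemidef.sqrt * V)ᴴ *
            (hA.posSemidef.sqrt - hB.posSemidef.sqrt * V)).trace).re) ∧
      (((hA.posSemidef.sqrt -
          hB.posSemidef.sqrt * (hB.posSemidef.sqrt⁻¹ * hA.posSemidef.sqrt⁻¹ * hS.sqrt))ᴴ *
        (hA.posSemidef.sqrt -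
          hB.posSemidef.sqrt * (hB.posSemidef.sqrt⁻¹ * hA.posSemidef.sqrt⁻¹ * hS.sqrt))).trace).re =
        A.trace.re + B.trace.re - 2 * hS.sqrt.trace.re := by
  set P := hA.posSemidef.sqrt
  set Q := hB.posSemidef.sqrt
  set S := hS.sqrt
  have hPP : P * P = A := hA.posSemidef.sqrt_mul_self
  have hPH : Pᴴ = P := hA.posSemidef.posSemidef_sqrt.isHermitian
  have hQH : Qᴴ = Q := hB.posSemidef.posSemidef_sqrt.isHermitian
  have hBdet : IsUnit B.det := (isUnit_iff_isUnit_det B).mp hB.isUnit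
  have hPdet : IsUnit P.det :=
    hA.posSemidef.isUnit_det_sqrt ((isUnit_iff_isUnit_det A).mp hA.isUnit)
  have hQdet : IsUnit Q.det := hB.posSemidef.isUnit_det_sqrt hBdet
  have hSdet : IsUnit S.det :=
    hS.isUnit_det_sqrt (by simpa only [det_mul] using (hPdet.mul hBdet).mul hPdet)
  have hdist : ∀ X, X * Xᴴ = B → ((P - X)ᴴ * (P - X)).trace.re =
      A.trace.re + B.trace.re - 2 * (P * X).trace.re := fun X hX => by
    simpa only [hPH, hX, hPP, RCLike.re_to_complex] using
      re_trace_conjTranspose_sub_mul_sub P X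
  refine ⟨fun V hV => ?_, ?_⟩
  · have hQV : Q * V * (Q * V)ᴴ = B := by
      rw [conjTranspose_mul, hQH, mul_assoc, ← mul_assoc V, ← star_eq_conjTranspose,
        mem_unitaryGroup_iff.mp hV, one_mul, hB.posSemidef.sqrt_mul_self]
    have hPQV : P * (Q * V) * (P * (Q * V))ᴴ = S * S := by
      rw [hS.sqrt_mul_self, conjTranspose_mul P, hPH, mul_assoc, ← mul_assoc (Q * V), hQV,
        mul_assoc]
    have hbound := hS.posSemidef_sqrt.re_trace_le_of_mul_conjTranspose_eq hSdet hPQV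
    rw [RCLike.re_to_complex, RCLike.re_to_complex] at hbound
    rw [hdist _ hQV]
    linarith
  · have hQV : Q * (Q⁻¹ * P⁻¹ * S) = P⁻¹ * S := by
      rw [mul_assoc, mul_nonsing_inv_cancel_left _ _ hQdet]
    have hX : P⁻¹ * S * (P⁻¹ * S)ᴴ = B := by
      rw [conjTranspose_mul, conjTranspose_nonsing_inv, hPH, hS.posSemidef_sqrt.isHermitian.eq,
        mul_assoc, ← mul_assoc S, hS.sqrt_mul_self, mul_assoc, mul_assoc,
        mul_nonsing_inv _ hPdet, mul_one, nonsing_inv_mul_cancel_left _ _ hPdet]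
    rw [hQV, hdist _ hX, mul_nonsing_inv_cancel_left _ _ hPdet]
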